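/- arXiv:2209.06031 — 4 statements merged into one kernel-verified Lean document; each statement's English description precedes it below -/
import Mathlib

section
/- Reflection positivity: for any operator A in the subalgebra 𝒜₋ generated by {ψ(x), ψ(x)* : x ∈ Λ₋}, it holds that tr(A ϑ(A)) ≥ 0 (the trace is real and nonnegative); the same holds for A in 𝒜₊. -/
/-!
Rewrite `ψ` in terms of the Majorana operators `ψ x + ψ x*` and `i (ψ x - ψ x*)`, which square
to `1` and pairwise anticommute. Up to sign, every word in them equals a word without repeated
letters, and such a word is traceless unless it is empty. Hence the trace factorises,
`N · tr (X Y) = tr X · tr Y`, when `X` and `Y` are generated by disjoint sets of Majoranas, and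
`tr ϑ(X) = conj (tr X)`. Since `ϑ` maps the Majoranas over `Λ₋` to multiples of those over
`r(Λ₋) ⊆ Λ₊`, this gives `tr (A ϑ(A)) = |tr A|² / N ≥ 0`.
-/

open Matrix

noncomputable section

/-- The periodic lattice `Λ = ({-L+1, …, L})^ν` with coordinates mod `2L`. -/
abbrev Site (ν L : ℕ) := Fin ν → ZMod (2 * L)

variable {ν L N : ℕ}

/-- Canonical anticommutation relations for `ψ : Λ → M_N(ℂ)`. -/
def CAR (ψ : Site ν L → Matrix (Fin N) (Fin N) ℂ) : Prop :=
  (∀ x y, ψ x * star (ψ y) + star (ψ y) * ψ x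
      = if x = y then (1 : Matrix (Fin N) (Fin N) ℂ) else 0) ∧
  (∀ x y, ψ x * ψ y + ψ y * ψ x = 0)

/-- The left half `Λ₋ = {x ∈ Λ : -L+1 ≤ x⁽¹⁾ ≤ 0}` (in terms of representatives
mod `2L`, first coordinate `0` or in `{L+1,…,2L-1}`). -/
def LambdaMinus (ν L : ℕ) [NeZero ν] : Set (Site ν L) :=
  {x | (x 0).val = 0 ∨ L + 1 ≤ (x 0).val}

/-- The right half `Λ₊ = {x ∈ Λ : 1 ≤ x⁽¹⁾ ≤ L}`. -/
def LambdaPlus (ν L : ℕ) [NeZero ν] : Set (Site ν L) :=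
  {x | 1 ≤ (x 0).val ∧ (x 0).val ≤ L}

/-- The reflection `r(x) = (1 - x⁽¹⁾, x⁽²⁾, …, x⁽ᵛ⁾)` across the hyperplane
`x⁽¹⁾ = 1/2`. -/
def reflMap (ν L : ℕ) [NeZero ν] (x : Site ν L) : Site ν L :=
  fun i => if i = 0 then 1 - x 0 else x i

/-- The unital subalgebra `𝒜₋` generated by `{ψ(x), ψ(x)* : x ∈ Λ₋}`. -/
def algMinus (ν L N : ℕ) [NeZero ν]
    (ψ : Site ν L → Matrix (Fin N) (Fin N) ℂ) :
    Subalgebra ℂ (Matrix (Fin N) (Fin N) ℂ) :=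
  Algebra.adjoin ℂ {M | ∃ x ∈ LambdaMinus ν L, M = ψ x ∨ M = star (ψ x)}

/-- The unital subalgebra `𝒜₊` generated by `{ψ(x), ψ(x)* : x ∈ Λ₊}`. -/
def algPlus (ν L N : ℕ) [NeZero ν]
    (ψ : Site ν L → Matrix (Fin N) (Fin N) ℂ) :
    Subalgebra ℂ (Matrix (Fin N) (Fin N) ℂ) :=
  Algebra.adjoin ℂ {M | ∃ x ∈ LambdaPlus ν L, M = ψ x ∨ M = star (ψ x)}


theorem Submonoid.exists_list_map_prod_of_mem_closure_image {ι M : Type*} [Monoid M] {c : ι → M}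
    {S : Set ι} {x : M} (hx : x ∈ Submonoid.closure (c '' S)) :
    ∃ l : List ι, (∀ a ∈ l, a ∈ S) ∧ (l.map c).prod = x := by
  induction hx using Submonoid.closure_induction with
  | mem y hy =>
    obtain ⟨a, ha, rfl⟩ := hy
    exact ⟨[a], by simpa, by simp⟩
  | one => exact ⟨[], by simp, by simp⟩
  | mul y z _ _ hy hz =>
    obtain ⟨l₁, hl₁, rfl⟩ := hy
    obtain ⟨l₂, hl₂, rfl⟩ := hz
    exact ⟨l₁ ++ l₂, fun a ha => (List.mem_append.1 ha).elim (hl₁ a) (hl₂ a), by simp⟩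

theorem Algebra.list_prod_map_mem_adjoin_image {ι R A : Type*} [CommSemiring R] [Semiring A]
    [Algebra R A] {c : ι → A} {S : Set ι} {l : List ι} (hl : ∀ a ∈ l, a ∈ S) :
    (l.map c).prod ∈ Algebra.adjoin R (c '' S) :=
  Subalgebra.list_prod_mem _ fun _ hy =>
    let ⟨a, ha, hay⟩ := List.mem_map.1 hy
    hay ▸ Algebra.subset_adjoin (Set.mem_image_of_mem c (hl a ha))

theorem Algebra.adjoin_image_induction {ι R A : Type*} [CommSemiring R] [Semiring A] [Algebra R A]
    {c : ι → A} {S : Set ι} {motive : (x : A) → x ∈ Algebra.adjoin R (c '' S) → Prop}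
    (prod : ∀ l (hl : ∀ a ∈ l, a ∈ S), motive (l.map c).prod (list_prod_map_mem_adjoin_image hl))
    (zero : motive 0 (zero_mem _))
    (add : ∀ x y hx hy, motive x hx → motive y hy → motive (x + y) (add_mem hx hy))
    (smul : ∀ (r : R) x hx, motive x hx → motive (r • x) (Subalgebra.smul_mem _ hx r)) {x : A}
    (hx : x ∈ Algebra.adjoin R (c '' S)) : motive x hx := by
  have span_eq := Algebra.adjoin_eq_span R (c '' S)
  have hx' : x ∈ Subalgebra.toSubmodule (Algebra.adjoin R (c '' S)) := hx
  rw [span_eq] at hx'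
  induction hx' using Submodule.span_induction with
  | mem y hy =>
    obtain ⟨l, hl, rfl⟩ := Submonoid.exists_list_map_prod_of_mem_closure_image hy
    exact prod l hl
  | zero => exact zero
  | add y z hy' hz' hy hz =>
    rw [← span_eq] at hy' hz'
    exact add y z hy' hz' (hy hy') (hz hz')
  | smul r y hy' hy =>
    rw [← span_eq] at hy'
    exact smul r y hy' (hy hy')

theorem Matrix.trace_mul_eq_zero_of_mul_eq_neg {n R : Type*} [Fintype n] [CommRing R]
    [IsAddTorsionFree R] {X Y : Matrix n n R} (h : X * Y = -(Y * X)) :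
    trace (X * Y) = 0 := by
  refine self_eq_neg.1 ?_
  conv_lhs => rw [h, trace_neg, trace_mul_comm]

theorem List.Nodup.exists_notMem_of_odd_length {ι : Type*} [Fintype ι]
    (hι : Even (Fintype.card ι)) {m : List ι} (hm : m.Nodup) (hodd : Odd m.length) :
    ∃ d, d ∉ m := by
  classical
  by_contra! h
  have hcard : m.toFinset.card = Fintype.card ι := by
    rw [Finset.eq_univ_of_forall fun d => List.mem_toFinset.2 (h d), Finset.card_univ]
  rw [List.toFinset_card_of_nodup hm] at hcard
  exact Nat.not_even_iff_odd.2 hodd (hcard ▸ hι)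

theorem smul_add_smul_mul_add_mul {R A : Type*} [CommSemiring R] [Semiring A] [Algebra R A]
    (a a' b b' : A) (α β γ δ : R) :
    (α • a + β • a') * (γ • b + δ • b') + (γ • b + δ • b') * (α • a + β • a') =
      (α * γ) • (a * b + b * a) + (α * δ) • (a * b' + b' * a) + (β * γ) • (a' * b + b * a') +
        (β * δ) • (a' * b' + b' * a') := by
  simp only [add_mul, mul_add, smul_mul_smul_comm, smul_add]
  rw [mul_comm γ α, mul_comm δ α, mul_comm γ β, mul_comm δ β]
  abel

theorem ZMod.val_one_sub_add_val {m : ℕ} [Fact (1 < m)] (z : ZMod m) :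
    (1 - z).val + z.val = 1 ∨ (1 - z).val + z.val = m + 1 := by
  have h := ZMod.val_add (1 - z) z
  rw [sub_add_cancel, ZMod.val_one] at h
  have := ZMod.val_lt (1 - z)
  have := ZMod.val_lt z
  rcases lt_or_ge ((1 - z).val + z.val) m with hlt | hge
  · rw [Nat.mod_eq_of_lt hlt] at h
    exact Or.inl h.symm
  · rw [Nat.mod_eq_sub_mod hge, Nat.mod_eq_of_lt (by omega)] at h
    omega

structure IsMajoranaFamily {ι A : Type*} [Ring A] (c : ι → A) : Prop where
  mul_self : ∀ p, c p * c p = 1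
  anticomm : ∀ p q, p ≠ q → c p * c q = -(c q * c p)

namespace IsMajoranaFamily

variable {ι A : Type*} [Ring A] {c : ι → A}

theorem mul_prod_map_of_notMem (hc : IsMajoranaFamily c) {p : ι} :
    ∀ {l : List ι}, p ∉ l →
      c p * (l.map c).prod = (-1 : ℤ) ^ l.length • ((l.map c).prod * c p)
  | [], _ => by simp
  | a :: t, hp => by
    rw [List.mem_cons, not_or] at hp
    simp only [List.map_cons, List.prod_cons, List.length_cons, pow_succ]
    rw [← mul_assoc, hc.anticomm p a hp.1, neg_mul, mul_assoc, mul_prod_map_of_notMem hc hp.2,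
      mul_smul_comm, ← mul_assoc]
    module

theorem exists_nodup_prod_map_eq (hc : IsMajoranaFamily c) :
    ∀ l : List ι, ∃ (m : List ι) (k : ℕ), m.Nodup ∧ m ⊆ l ∧
      (l.map c).prod = (-1 : ℤ) ^ k • (m.map c).prod
  | [] => ⟨[], 0, List.nodup_nil, List.Subset.refl _, by simp⟩
  | a :: t => by
    obtain ⟨m, k, hm, hmt, ht⟩ := exists_nodup_prod_map_eq hc t
    by_cases ha : a ∈ m
    · obtain ⟨m₁, m₂, rfl⟩ := List.append_of_mem ha
      have ha₁ : a ∉ m₁ := fun h => (List.nodup_append.1 hm).2.2 a h a List.mem_cons_self rfl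
      have hsub : (m₁ ++ m₂).Sublist (m₁ ++ a :: m₂) :=
        (List.sublist_cons_self a m₂).append_left m₁
      refine ⟨m₁ ++ m₂, k + m₁.length, hm.sublist hsub,
        fun b hb => List.mem_cons_of_mem a (hmt (hsub.subset hb)), ?_⟩
      simp only [List.map_cons, List.prod_cons, ht, List.map_append, List.prod_append,
        mul_smul_comm, ← mul_assoc, hc.mul_prod_map_of_notMem ha₁, smul_mul_assoc]
      rw [smul_smul, ← pow_add, mul_assoc (List.map c m₁).prod, hc.mul_self, mul_one]
    · refine ⟨a :: m, k, List.nodup_cons.2 ⟨ha, hm⟩, List.cons_subset_cons a hmt, ?_⟩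
      simp only [List.map_cons, List.prod_cons, ht, mul_smul_comm]

end IsMajoranaFamily

namespace IsMajoranaFamily

variable {ι n R : Type*} [Fintype ι] [Fintype n] [DecidableEq n] [CommRing R]
  [IsAddTorsionFree R] {c : ι → Matrix n n R}

/-- For odd length conjugate by a letter missing from the word (one exists since the family has
even size); for even length cycle the first letter to the end. -/
theorem trace_prod_map_of_nodup (hc : IsMajoranaFamily c)
    (hι : Even (Fintype.card ι)) {m : List ι} (hm : m.Nodup) :
    trace (m.map c).prod = if m = [] then (Fintype.card n : R) else 0 := by
  rcases m with _ | ⟨a, t⟩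
  · simp
  rw [if_neg (List.cons_ne_nil a t)]
  rcases Nat.even_or_odd t.length with ht | ht
  · have hodd : Odd (a :: t).length := by simpa [Nat.odd_add_one]
    obtain ⟨d, hd⟩ := hm.exists_notMem_of_odd_length hι hodd
    rw [← mul_one (List.map c _).prod, ← hc.mul_self d, ← mul_assoc]
    refine Matrix.trace_mul_eq_zero_of_mul_eq_neg ?_
    rw [← mul_assoc, hc.mul_prod_map_of_notMem hd, hodd.neg_one_pow, neg_one_zsmul, neg_mul,
      neg_neg]
  · rw [List.map_cons, List.prod_cons]
    refine Matrix.trace_mul_eq_zero_of_mul_eq_neg ?_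
    rw [hc.mul_prod_map_of_notMem (List.nodup_cons.1 hm).1, ht.neg_one_pow, neg_one_zsmul]

theorem card_mul_trace_prod_map_mul (hc : IsMajoranaFamily c)
    (hι : Even (Fintype.card ι)) {S T : Set ι} (hST : Disjoint S T) {l₁ l₂ : List ι}
    (h₁ : ∀ a ∈ l₁, a ∈ S) (h₂ : ∀ a ∈ l₂, a ∈ T) :
    (Fintype.card n : R) * trace ((l₁.map c).prod * (l₂.map c).prod) =
      trace (l₁.map c).prod * trace (l₂.map c).prod := by
  obtain ⟨m₁, k₁, hm₁, hm₁l, e₁⟩ := hc.exists_nodup_prod_map_eq l₁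
  obtain ⟨m₂, k₂, hm₂, hm₂l, e₂⟩ := hc.exists_nodup_prod_map_eq l₂
  have hm : (m₁ ++ m₂).Nodup := List.nodup_append.2 ⟨hm₁, hm₂, fun a ha b hb hab =>
    Set.disjoint_left.1 hST (h₁ a (hm₁l ha)) (hab ▸ h₂ b (hm₂l hb))⟩
  have htr := hc.trace_prod_map_of_nodup hι hm
  simp only [List.map_append, List.prod_append, List.append_eq_nil_iff] at htr
  rw [e₁, e₂, smul_mul_smul_comm, trace_smul, trace_smul, trace_smul, htr,
    hc.trace_prod_map_of_nodup hι hm₁, hc.trace_prod_map_of_nodup hι hm₂]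
  by_cases h₁ : m₁ = [] <;> by_cases h₂ : m₂ = [] <;> simp [h₁, h₂]
  ring

theorem card_mul_trace_mul (hc : IsMajoranaFamily c) (hι : Even (Fintype.card ι))
    {S T : Set ι} (hST : Disjoint S T) {X Y : Matrix n n R}
    (hX : X ∈ Algebra.adjoin R (c '' S)) (hY : Y ∈ Algebra.adjoin R (c '' T)) :
    (Fintype.card n : R) * trace (X * Y) = trace X * trace Y := by
  induction hX using Algebra.adjoin_image_induction with
  | prod l₁ h₁ =>
    induction hY using Algebra.adjoin_image_induction with
    | prod l₂ h₂ => exact hc.card_mul_trace_prod_map_mul hι hST h₁ h₂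
    | zero => simp
    | add Y₁ Y₂ _ _ e₁ e₂ => simp only [mul_add, trace_add]; linear_combination e₁ + e₂
    | smul r Y _ e => simp only [mul_smul_comm, trace_smul, smul_eq_mul]; linear_combination r * e
  | zero => simp
  | add X₁ X₂ _ _ e₁ e₂ => simp only [add_mul, trace_add]; linear_combination e₁ + e₂
  | smul r X _ e => simp only [smul_mul_assoc, trace_smul, smul_eq_mul]; linear_combination r * e

end IsMajoranaFamily

section Reflection

variable {ι n R : Type*} [Fintype n] [DecidableEq n] [CommRing R]
  {c : ι → Matrix n n R} {θ : Matrix n n R →+* Matrix n n R} {rf : ι → ι} {σ : ι → R}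

theorem map_prod_map_eq_smul (hθc : ∀ p, θ (c p) = σ p • c (rf p)) (l : List ι) :
    θ (l.map c).prod = (l.map σ).prod • ((l.map rf).map c).prod := by
  induction l with
  | nil => simp
  | cons a t ih => simp only [List.map_cons, List.prod_cons, map_mul, hθc, ih, smul_mul_smul_comm]

variable [StarRing R]

theorem map_mem_adjoin_image (hθ : ∀ (r : R) X, θ (r • X) = starRingEnd R r • θ X)
    (hθc : ∀ p, θ (c p) = σ p • c (rf p)) {S : Set ι} {X : Matrix n n R}
    (hX : X ∈ Algebra.adjoin R (c '' S)) : θ X ∈ Algebra.adjoin R (c '' (rf '' S)) := by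
  induction hX using Algebra.adjoin_image_induction with
  | prod l hl =>
    rw [map_prod_map_eq_smul hθc]
    refine Subalgebra.smul_mem _ (Algebra.list_prod_map_mem_adjoin_image fun b hb => ?_) _
    obtain ⟨a, ha, rfl⟩ := List.mem_map.1 hb
    exact Set.mem_image_of_mem rf (hl a ha)
  | zero => simp
  | add X Y _ _ hX hY => simpa using add_mem hX hY
  | smul r X _ hX => simpa [hθ] using Subalgebra.smul_mem _ hX (starRingEnd R r)

variable [IsAddTorsionFree R] [Fintype ι]

theorem IsMajoranaFamily.trace_map_eq_star (hc : IsMajoranaFamily c)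
    (hι : Even (Fintype.card ι)) (hrf : Function.Injective rf)
    (hθ : ∀ (r : R) X, θ (r • X) = starRingEnd R r • θ X) (hθc : ∀ p, θ (c p) = σ p • c (rf p))
    {S : Set ι} {X : Matrix n n R} (hX : X ∈ Algebra.adjoin R (c '' S)) :
    trace (θ X) = starRingEnd R (trace X) := by
  induction hX using Algebra.adjoin_image_induction with
  | prod l _ =>
    obtain ⟨m, k, hm, -, e⟩ := hc.exists_nodup_prod_map_eq l
    rw [e, map_zsmul, map_prod_map_eq_smul hθc, trace_smul, trace_smul, trace_smul,
      hc.trace_prod_map_of_nodup hι hm, hc.trace_prod_map_of_nodup hι (hm.map hrf)]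
    by_cases hm0 : m = [] <;> simp [hm0]
  | zero => simp
  | add X Y _ _ hX hY => simp [hX, hY]
  | smul r X _ hX => simp [hθ, hX]

theorem IsMajoranaFamily.card_mul_trace_mul_map_self (hc : IsMajoranaFamily c)
    (hι : Even (Fintype.card ι)) (hrf : Function.Injective rf)
    (hθ : ∀ (r : R) X, θ (r • X) = starRingEnd R r • θ X) (hθc : ∀ p, θ (c p) = σ p • c (rf p))
    {S : Set ι} (hS : Disjoint S (rf '' S)) {X : Matrix n n R}
    (hX : X ∈ Algebra.adjoin R (c '' S)) :
    (Fintype.card n : R) * trace (X * θ X) = trace X * starRingEnd R (trace X) := by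
  rw [hc.card_mul_trace_mul hι hS hX (map_mem_adjoin_image hθ hθc hX),
    hc.trace_map_eq_star hι hrf hθ hθc hX]

end Reflection

theorem IsMajoranaFamily.trace_mul_map_self_nonneg {ι n : Type*} [Fintype ι] [Fintype n]
    [DecidableEq n] {c : ι → Matrix n n ℂ} {rf : ι → ι}
    {θ : Matrix n n ℂ →+* Matrix n n ℂ} {σ : ι → ℂ} (hc : IsMajoranaFamily c)
    (hι : Even (Fintype.card ι)) (hrf : Function.Injective rf)
    (hθ : ∀ (r : ℂ) X, θ (r • X) = starRingEnd ℂ r • θ X) (hθc : ∀ p, θ (c p) = σ p • c (rf p))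
    {S : Set ι} (hS : Disjoint S (rf '' S)) {X : Matrix n n ℂ}
    (hX : X ∈ Algebra.adjoin ℂ (c '' S)) :
    0 ≤ (trace (X * θ X)).re ∧ (trace (X * θ X)).im = 0 := by
  have h := hc.card_mul_trace_mul_map_self hι hrf hθ hθc hS hX
  rw [Complex.mul_conj] at h
  rcases (Fintype.card n).eq_zero_or_pos with hn | hn
  · have : IsEmpty n := Fintype.card_eq_zero_iff.1 hn
    simp [Matrix.trace]
  have htr : trace (X * θ X) = ((Complex.normSq (trace X) / Fintype.card n : ℝ) : ℂ) := by
    rw [Complex.ofReal_div, eq_div_iff (by exact_mod_cast hn.ne'), ← h]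
    push_cast
    ring
  rw [htr, Complex.ofReal_re, Complex.ofReal_im]
  exact ⟨div_nonneg (Complex.normSq_nonneg _) (Nat.cast_nonneg _), rfl⟩

section Fermions

/-- The Majorana operators `ψ x + ψ x*` (at `(x, false)`) and `i (ψ x - ψ x*)` (at `(x, true)`). -/
def majorana (ψ : Site ν L → Matrix (Fin N) (Fin N) ℂ) (p : Site ν L × Bool) :
    Matrix (Fin N) (Fin N) ℂ :=
  (if p.2 then Complex.I else 1) • ψ p.1 + (if p.2 then -Complex.I else 1) • star (ψ p.1)

theorem majorana_mul_add_mul {ψ : Site ν L → Matrix (Fin N) (Fin N) ℂ} (hCAR : CAR ψ)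
    (x y : Site ν L) (b b' : Bool) :
    majorana ψ (x, b) * majorana ψ (y, b') + majorana ψ (y, b') * majorana ψ (x, b) =
      ((if b then Complex.I else 1) * (if b' then -Complex.I else 1) +
        (if b then -Complex.I else 1) * (if b' then Complex.I else 1)) •
        (if x = y then 1 else 0) := by
  have h₁ := hCAR.1 y x
  have h₂ := congrArg star (hCAR.2 y x)
  simp only [eq_comm (a := y)] at h₁
  rw [add_comm] at h₁
  rw [star_add, star_mul, star_mul, star_zero] at h₂
  rw [majorana, majorana, smul_add_smul_mul_add_mul, hCAR.2, hCAR.1, h₁, h₂, add_smul]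
  simp

theorem isMajoranaFamily_majorana {ψ : Site ν L → Matrix (Fin N) (Fin N) ℂ} (hCAR : CAR ψ) :
    IsMajoranaFamily (majorana ψ) where
  mul_self := by
    rintro ⟨x, b⟩
    have h := majorana_mul_add_mul hCAR x x b b
    rw [← two_smul ℂ] at h
    refine smul_right_injective _ two_ne_zero (h.trans ?_)
    cases b <;> norm_num
  anticomm := by
    rintro ⟨x, b⟩ ⟨y, b'⟩ hne
    rw [← add_eq_zero_iff_eq_neg, majorana_mul_add_mul hCAR]
    by_cases hxy : x = y
    · subst hxy
      cases b <;> cases b' <;> simp_all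
    · simp [hxy]

theorem adjoin_psi_le_adjoin_majorana (ψ : Site ν L → Matrix (Fin N) (Fin N) ℂ)
    (S : Set (Site ν L)) :
    Algebra.adjoin ℂ {M | ∃ x ∈ S, M = ψ x ∨ M = star (ψ x)} ≤
      Algebra.adjoin ℂ (majorana ψ '' (Prod.fst ⁻¹' S)) := by
  have hmem : ∀ x ∈ S, ∀ b, majorana ψ (x, b) ∈ Algebra.adjoin ℂ (majorana ψ '' (Prod.fst ⁻¹' S)) :=
    fun x hx b => Algebra.subset_adjoin ⟨(x, b), hx, rfl⟩
  refine Algebra.adjoin_le ?_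
  rintro _ ⟨x, hx, rfl | rfl⟩
  · have e : ψ x = (2⁻¹ : ℂ) • majorana ψ (x, false) + (-Complex.I / 2) • majorana ψ (x, true) := by
      simp only [majorana, Bool.false_eq_true, if_true, if_false]
      match_scalars <;> ring_nf <;> norm_num [Complex.I_sq]
    rw [e]
    exact add_mem (Subalgebra.smul_mem _ (hmem x hx _) _) (Subalgebra.smul_mem _ (hmem x hx _) _)
  · have e : star (ψ x) =
        (2⁻¹ : ℂ) • majorana ψ (x, false) + (Complex.I / 2) • majorana ψ (x, true) := by
      simp only [majorana, Bool.false_eq_true, if_true, if_false]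
      match_scalars <;> ring_nf <;> norm_num [Complex.I_sq]
    rw [e]
    exact add_mem (Subalgebra.smul_mem _ (hmem x hx _) _) (Subalgebra.smul_mem _ (hmem x hx _) _)

variable {ψ : Site ν L → Matrix (Fin N) (Fin N) ℂ}
  {ϑ : Matrix (Fin N) (Fin N) ℂ → Matrix (Fin N) (Fin N) ℂ}

theorem map_majorana [NeZero ν] (hadd : ∀ A B, ϑ (A + B) = ϑ A + ϑ B)
    (hsmul : ∀ (c : ℂ) (A), ϑ (c • A) = (starRingEnd ℂ c) • ϑ A)
    (hψ : ∀ x, ϑ (ψ x) = ψ (reflMap ν L x))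
    (hψstar : ∀ x, ϑ (star (ψ x)) = star (ψ (reflMap ν L x))) (p : Site ν L × Bool) :
    ϑ (majorana ψ p) = (if p.2 then -1 else 1 : ℂ) • majorana ψ (reflMap ν L p.1, p.2) := by
  rcases p with ⟨x, _ | _⟩ <;> simp only [majorana, hadd, hsmul, hψ, hψstar] <;> simp

theorem map_one_of_map_psi [NeZero ν] (hCAR : CAR ψ) (hadd : ∀ A B, ϑ (A + B) = ϑ A + ϑ B)
    (hsmul : ∀ (c : ℂ) (A), ϑ (c • A) = (starRingEnd ℂ c) • ϑ A)
    (hmul : ∀ A B, ϑ (A * B) = ϑ A * ϑ B)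
    (hψ : ∀ x, ϑ (ψ x) = ψ (reflMap ν L x))
    (hψstar : ∀ x, ϑ (star (ψ x)) = star (ψ (reflMap ν L x))) : ϑ 1 = 1 := by
  have hc := isMajoranaFamily_majorana hCAR
  have h := map_majorana hadd hsmul hψ hψstar (0, false)
  rw [if_neg Bool.false_ne_true, one_smul] at h
  nth_rewrite 1 [← hc.mul_self (0, false)]
  rw [hmul, h, hc.mul_self]

end Fermions

section Geometry

variable [NeZero ν]

theorem reflMap_involutive : Function.Involutive (reflMap ν L) := by
  intro x
  funext i
  by_cases hi : i = 0 <;> simp [reflMap, hi]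

theorem disjoint_LambdaMinus_LambdaPlus : Disjoint (LambdaMinus ν L) (LambdaPlus ν L) :=
  Set.disjoint_left.2 fun x h₁ h₂ => by
    simp only [LambdaMinus, LambdaPlus, Set.mem_ofPred_eq] at h₁ h₂
    omega

theorem val_reflMap_add_val [NeZero L] (x : Site ν L) :
    (reflMap ν L x 0).val + (x 0).val = 1 ∨ (reflMap ν L x 0).val + (x 0).val = 2 * L + 1 := by
  have : Fact (1 < 2 * L) := ⟨by have := NeZero.pos L; omega⟩
  simpa [reflMap] using ZMod.val_one_sub_add_val (x 0)

theorem mapsTo_reflMap_LambdaMinus [NeZero L] :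
    Set.MapsTo (reflMap ν L) (LambdaMinus ν L) (LambdaPlus ν L) := fun x hx => by
  have := ZMod.val_lt (x 0)
  have := ZMod.val_lt (reflMap ν L x 0)
  have := NeZero.pos L
  have := val_reflMap_add_val x
  simp only [LambdaMinus, LambdaPlus, Set.mem_ofPred_eq] at hx ⊢
  omega

theorem mapsTo_reflMap_LambdaPlus [NeZero L] :
    Set.MapsTo (reflMap ν L) (LambdaPlus ν L) (LambdaMinus ν L) := fun x hx => by
  have := ZMod.val_lt (x 0)
  have := val_reflMap_add_val x
  simp only [LambdaMinus, LambdaPlus, Set.mem_ofPred_eq] at hx ⊢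
  omega

end Geometry

theorem trace_mul_map_self_nonneg_of_mapsTo [NeZero ν] [NeZero L]
    {ψ : Site ν L → Matrix (Fin N) (Fin N) ℂ} (hCAR : CAR ψ)
    (θ : Matrix (Fin N) (Fin N) ℂ →+* Matrix (Fin N) (Fin N) ℂ)
    (hθ : ∀ (c : ℂ) A, θ (c • A) = starRingEnd ℂ c • θ A)
    (hψ : ∀ x, θ (ψ x) = ψ (reflMap ν L x))
    (hψstar : ∀ x, θ (star (ψ x)) = star (ψ (reflMap ν L x)))
    {Λ₁ Λ₂ : Set (Site ν L)} (hΛ : Disjoint Λ₁ Λ₂) (hr : Set.MapsTo (reflMap ν L) Λ₁ Λ₂)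
    {A : Matrix (Fin N) (Fin N) ℂ}
    (hA : A ∈ Algebra.adjoin ℂ {M | ∃ x ∈ Λ₁, M = ψ x ∨ M = star (ψ x)}) :
    0 ≤ (A * θ A).trace.re ∧ (A * θ A).trace.im = 0 := by
  have hι : Even (Fintype.card (Site ν L × Bool)) := by
    rw [Fintype.card_prod, Fintype.card_bool]
    exact even_two.mul_left _
  have hrf : Function.Injective (Prod.map (reflMap ν L) id : Site ν L × Bool → _) :=
    reflMap_involutive.injective.prodMap Function.injective_id
  have hS : Disjoint (Prod.fst ⁻¹' Λ₁ : Set (Site ν L × Bool))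
      (Prod.map (reflMap ν L) id '' (Prod.fst ⁻¹' Λ₁)) := by
    refine (hΛ.preimage Prod.fst).mono_right ?_
    rintro _ ⟨p, hp, rfl⟩
    exact hr hp
  exact (isMajoranaFamily_majorana hCAR).trace_mul_map_self_nonneg hι hrf hθ
    (map_majorana (map_add θ) hθ hψ hψstar) hS (adjoin_psi_le_adjoin_majorana ψ Λ₁ hA)

theorem reflection_positivity_general (ν L N : ℕ) [NeZero ν]
    (hL : 1 ≤ L)
    (ψ : Site ν L → Matrix (Fin N) (Fin N) ℂ) (hCAR : CAR ψ)
    (ϑ : Matrix (Fin N) (Fin N) ℂ → Matrix (Fin N) (Fin N) ℂ)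
    (hadd : ∀ A B, ϑ (A + B) = ϑ A + ϑ B)
    (hsmul : ∀ (c : ℂ) (A), ϑ (c • A) = (starRingEnd ℂ c) • ϑ A)
    (hmul : ∀ A B, ϑ (A * B) = ϑ A * ϑ B)
    (hψ : ∀ x, ϑ (ψ x) = ψ (reflMap ν L x))
    (hψstar : ∀ x, ϑ (star (ψ x)) = star (ψ (reflMap ν L x))) :
    (∀ A ∈ algMinus ν L N ψ,
        0 ≤ (A * ϑ A).trace.re ∧ (A * ϑ A).trace.im = 0) ∧
    (∀ A ∈ algPlus ν L N ψ,
        0 ≤ (A * ϑ A).trace.re ∧ (A * ϑ A).trace.im = 0) := by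
  have : NeZero L := ⟨by omega⟩
  let θ : Matrix (Fin N) (Fin N) ℂ →+* Matrix (Fin N) (Fin N) ℂ :=
    RingHom.mk' ⟨⟨ϑ, map_one_of_map_psi hCAR hadd hsmul hmul hψ hψstar⟩, hmul⟩ hadd
  exact ⟨fun A hA => trace_mul_map_self_nonneg_of_mapsTo hCAR θ hsmul hψ hψstar
      disjoint_LambdaMinus_LambdaPlus mapsTo_reflMap_LambdaMinus hA,
    fun A hA => trace_mul_map_self_nonneg_of_mapsTo hCAR θ hsmul hψ hψstar
      disjoint_LambdaMinus_LambdaPlus.symm mapsTo_reflMap_LambdaPlus hA⟩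

/-- **Reflection positivity** (Lemma 3.2): for the antilinear reflection `ϑ`
(multiplicative, star-preserving, sending `ψ(x)` to `ψ(r(x))`), any `A` in the
subalgebra `𝒜₋` generated by `{ψ(x), ψ(x)* : x ∈ Λ₋}` satisfies `tr(A ϑ(A)) ≥ 0`
(the trace is real and nonnegative); the same holds for `A ∈ 𝒜₊`. -/
theorem reflection_positivity (ν L N : ℕ) [NeZero ν]
    (hν : 2 ≤ ν) (hL : 1 ≤ L) (hN : 1 ≤ N)
    (ψ : Site ν L → Matrix (Fin N) (Fin N) ℂ) (hCAR : CAR ψ)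
    (ϑ : Matrix (Fin N) (Fin N) ℂ → Matrix (Fin N) (Fin N) ℂ)
    (hadd : ∀ A B, ϑ (A + B) = ϑ A + ϑ B)
    (hsmul : ∀ (c : ℂ) (A), ϑ (c • A) = (starRingEnd ℂ c) • ϑ A)
    (hmul : ∀ A B, ϑ (A * B) = ϑ A * ϑ B)
    (hstar : ∀ A, ϑ (star A) = star (ϑ A))
    (hψ : ∀ x, ϑ (ψ x) = ψ (reflMap ν L x))
    (hψstar : ∀ x, ϑ (star (ψ x)) = star (ψ (reflMap ν L x))) :
    (∀ A ∈ algMinus ν L N ψ,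
        0 ≤ (A * ϑ A).trace.re ∧ (A * ϑ A).trace.im = 0) ∧
    (∀ A ∈ algPlus ν L N ψ,
        0 ≤ (A * ϑ A).trace.re ∧ (A * ϑ A).trace.im = 0) :=
  reflection_positivity_general ν L N hL ψ hCAR ϑ hadd hsmul hmul hψ hψstar
end
end

section
/- Particle-hole invariance: the particle-hole transformation U_PH := ∏_{x∈Λ} u(x) (product in a fixed order) satisfies (U_PH)* ψ(x) U_PH = ψ(x)* for all x ∈ Λ, (U_PH)* ρ(x) U_PH = −ρ(x) for all x ∈ Λ, and (U_PH)* H(0) U_PH = H(0), where H(0) is the Hamiltonian with zero mass parameter. -/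
open Matrix Filter MeasureTheory

noncomputable section

/-- The `μ`-th standard unit vector of the lattice. -/
def eVec (ν L : ℕ) (μ : Fin ν) : Site ν L := fun i => if i = μ then 1 else 0

/-- The staggered sign `(-1)^{x⁽¹⁾+⋯+x⁽ᵛ⁾}`. -/
def sgn {ν L : ℕ} (x : Site ν L) : ℂ := (-1 : ℂ) ^ (∑ i, (x i).val)

/-- The exponents `θ_μ(x)` of the staggered hopping amplitudes. -/
def theta {ν L : ℕ} (μ : Fin ν) (x : Site ν L) : ℕ :=
  (∑ i : Fin ν, if (i : ℕ) < (μ : ℕ) then (x i).val else 0) +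
    (if x μ = (L : ZMod (2 * L)) then 1 else 0)

variable {ν L N : ℕ}

/-- The charge density `ρ(x) = ψ(x)*ψ(x) - 1/2`. -/
def rho (ψ : Site ν L → Matrix (Fin N) (Fin N) ℂ) (x : Site ν L) :
    Matrix (Fin N) (Fin N) ℂ :=
  star (ψ x) * ψ x - (1 / 2 : ℂ) • 1

/-- The staggered hopping Hamiltonian `H_K`. -/
def HK [NeZero (2 * L)] (κ : ℝ) (ψ : Site ν L → Matrix (Fin N) (Fin N) ℂ) :
    Matrix (Fin N) (Fin N) ℂ :=
  (Complex.I * (κ : ℂ)) • ∑ x : Site ν L, ∑ μ : Fin ν,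
    ((-1 : ℂ) ^ theta μ x) •
      (star (ψ x) * ψ (x + eVec ν L μ) - star (ψ (x + eVec ν L μ)) * ψ x)

/-- The order parameter `O = Σ_x (-1)^{x⁽¹⁾+⋯+x⁽ᵛ⁾} ρ(x)`. -/
def orderOp [NeZero (2 * L)] (ψ : Site ν L → Matrix (Fin N) (Fin N) ℂ) :
    Matrix (Fin N) (Fin N) ℂ :=
  ∑ x : Site ν L, sgn x • rho ψ x

/-- The four-fermion interaction `Σ_x Σ_μ ρ(x) ρ(x+e_μ)`. -/
def Hint [NeZero (2 * L)] (ψ : Site ν L → Matrix (Fin N) (Fin N) ℂ) :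
    Matrix (Fin N) (Fin N) ℂ :=
  ∑ x : Site ν L, ∑ μ : Fin ν, rho ψ x * rho ψ (x + eVec ν L μ)

/-- The Hamiltonian `H(m) = H_K + m·O + g·H_int`. -/
def Ham [NeZero (2 * L)] (κ m g : ℝ) (ψ : Site ν L → Matrix (Fin N) (Fin N) ℂ) :
    Matrix (Fin N) (Fin N) ℂ :=
  HK κ ψ + (m : ℂ) • orderOp ψ + (g : ℂ) • Hint ψ

/-- The thermal expectation `⟨A⟩ = tr(A e^{-βH}) / tr(e^{-βH})`. -/
def thermal (β : ℝ) (H A : Matrix (Fin N) (Fin N) ℂ) : ℂ :=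
  (A * NormedSpace.exp ((-(β : ℂ)) • H)).trace /
    (NormedSpace.exp ((-(β : ℂ)) • H)).trace


/-- The number operator `n(y) = ψ(y)*ψ(y)`. -/
def numOp (ψ : Site ν L → Matrix (Fin N) (Fin N) ℂ) (y : Site ν L) :
    Matrix (Fin N) (Fin N) ℂ :=
  star (ψ y) * ψ y

/-- The parity factor `exp(iπ n(y))`. -/
def parityFactor (ψ : Site ν L → Matrix (Fin N) (Fin N) ℂ) (y : Site ν L) :
    Matrix (Fin N) (Fin N) ℂ :=
  NormedSpace.exp ((Complex.I * (Real.pi : ℂ)) • numOp ψ y)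

/-- The operator `u(x) = [∏_{y ≠ x} exp(iπ n(y))] (ψ(x)* + ψ(x))`, the product being
taken in a fixed order (the one given by `Finset.toList`). -/
def uOp [NeZero (2 * L)] (ψ : Site ν L → Matrix (Fin N) (Fin N) ℂ)
    (x : Site ν L) : Matrix (Fin N) (Fin N) ℂ :=
  (((Finset.univ.erase x).toList).map (parityFactor ψ)).prod * (star (ψ x) + ψ x)

/-- The particle-hole transformation `U_PH = ∏_{x ∈ Λ} u(x)`, the product being
taken in a fixed order. -/
def UPH [NeZero (2 * L)] (ψ : Site ν L → Matrix (Fin N) (Fin N) ℂ) :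
    Matrix (Fin N) (Fin N) ℂ :=
  (((Finset.univ : Finset (Site ν L)).toList).map (uOp ψ)).prod

/-
`exp(iπ n(y)) = 1 - 2 n(y)` is the reflection in the projection `n(y)`: conjugation by it
negates `ψ(y)` and fixes every other `ψ(x)`. Hence the string `∏_{y ≠ x} exp(iπ n(y))` negates
each `ψ(y)` with `y ≠ x`, which undoes the sign coming from the anticommutation of `ψ(y)` with
`ψ(x)* + ψ(x)`; so conjugation by the unitary `u(x)` sends `ψ(x)` to `ψ(x)*` and fixes all other
`ψ(y)`. The product `U_PH`, containing each `u(x)` once, therefore implements the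
`*`-automorphism `ψ ↦ ψ*`, which maps `ρ = ψ*ψ - 1/2` to `ψψ* - 1/2 = -ρ` and, by the CAR, fixes
each hopping term `ψ(x)*ψ(y) - ψ(y)*ψ(x)`.
-/

theorem NormedSpace.exp_smul_of_isIdempotentElem {𝕂 𝔸 : Type*} [RCLike 𝕂] [Ring 𝔸]
    [Algebra 𝕂 𝔸] [TopologicalSpace 𝔸] [IsTopologicalRing 𝔸] [T2Space 𝔸]
    [ContinuousSMul 𝕂 𝔸] {p : 𝔸} (hp : IsIdempotentElem p) (c : 𝕂) :
    NormedSpace.exp (c • p) = 1 + (NormedSpace.exp c - 1) • p := by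
  have hterm : ∀ n : ℕ, ((n.factorial : 𝕂)⁻¹) • (c • p) ^ n
      = ((n.factorial : 𝕂)⁻¹ * c ^ n) • p + if n = 0 then 1 - p else 0 := by
    rintro (_ | n)
    · simp
    · rw [smul_pow, hp.pow_succ_eq, smul_smul, if_neg n.succ_ne_zero, add_zero]
  have hsum : HasSum (fun n : ℕ => ((n.factorial : 𝕂)⁻¹) • (c • p) ^ n)
      (NormedSpace.exp c • p + (1 - p)) := by
    simp only [hterm]
    exact ((NormedSpace.exp_series_hasSum_exp' (𝕂 := 𝕂) c).smul_const p).add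
      (hasSum_ite_eq 0 (1 - p))
  rw [congrFun (NormedSpace.exp_eq_tsum 𝕂) (c • p), hsum.tsum_eq, sub_smul, one_smul]
  abel

section Conjugate

variable {M : Type*} [Monoid M] [StarMul M]

theorem conjugate'_mul (u v a : M) :
    star (u * v) * a * (u * v) = star v * (star u * a * u) * v := by
  simp only [star_mul, mul_assoc]

theorem star_conjugate' (u a : M) : star (star u * a * u) = star u * star a * u := by
  simp only [star_mul, star_star, mul_assoc]

theorem List.conjugate'_prod_eq_self {l : List M} {a : M}
    (h : ∀ u ∈ l, star u * a * u = a) : star l.prod * a * l.prod = a := by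
  induction l with
  | nil => simp
  | cons u l ih =>
    rw [List.prod_cons, conjugate'_mul, h u List.mem_cons_self,
      ih fun v hv => h v (List.mem_cons_of_mem u hv)]

theorem List.conjugate'_prod_map_eq_of_mem {ι : Type*} (f : ι → M) {l : List ι}
    (hl : l.Nodup) {i : ι} (hi : i ∈ l) {a b : M} (hab : star (f i) * a * f i = b)
    (ha : ∀ j ≠ i, star (f j) * a * f j = a) (hb : ∀ j ≠ i, star (f j) * b * f j = b) :
    star (l.map f).prod * a * (l.map f).prod = b := by
  obtain ⟨s, t, rfl⟩ := List.append_of_mem hi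
  have hst : i ∉ s ∧ i ∉ t := by
    have := (List.nodup_cons.mp (List.nodup_middle.mp hl)).1
    simp_all
  have fixes {c : M} (hc : ∀ j ≠ i, star (f j) * c * f j = c) (r : List ι) (hr : i ∉ r) :
      star (r.map f).prod * c * (r.map f).prod = c :=
    List.conjugate'_prod_eq_self <| by
      simpa using fun j hj => hc j (ne_of_mem_of_not_mem hj hr)
  rw [List.map_append, List.map_cons, List.prod_append, List.prod_cons, conjugate'_mul,
    conjugate'_mul, fixes ha s hst.1, hab, fixes hb t hst.2]

end Conjugate

section FermionMode

variable {R : Type*} [Ring R] [StarRing R] {c d : R}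

theorem isStarProjection_star_mul_self_of_car (hc : c * c = 0)
    (hcc : c * star c + star c * c = 1) : IsStarProjection (star c * c) where
  isIdempotentElem := calc
    star c * c * (star c * c) = star c * (c * star c + star c * c) * c
        - star c * star c * (c * c) := by noncomm_ring
    _ = star c * c := by rw [hcc, hc, mul_zero, sub_zero, mul_one]
  isSelfAdjoint := .star_mul_self c

theorem star_add_self_mul_self_of_car (hc : c * c = 0) (hcc : c * star c + star c * c = 1) :
    (star c + c) * (star c + c) = 1 := by
  have hc' : star c * star c = 0 := by rw [← star_mul, hc, star_zero]
  rw [add_mul, mul_add, mul_add, hc, hc', add_comm (c * star c), ← hcc]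
  abel

theorem star_add_self_mem_unitary_of_car (hc : c * c = 0)
    (hcc : c * star c + star c * c = 1) : star c + c ∈ unitary R := by
  rw [Unitary.mem_iff, (IsSelfAdjoint.star_add_self c).star_eq,
    star_add_self_mul_self_of_car hc hcc]
  exact ⟨rfl, rfl⟩

theorem conjugate'_star_add_self_of_car (hc : c * c = 0) (hcc : c * star c + star c * c = 1) :
    star (star c + c) * c * (star c + c) = star c := calc
  star (star c + c) * c * (star c + c)
      = star c * (c * star c + star c * c) - star c * star c * c + c * c * (star c + c)
        + star c * (c * c) := by
    rw [(IsSelfAdjoint.star_add_self c).star_eq]; noncomm_ring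
  _ = star c := by
    rw [hcc, hc, ← star_mul, hc, star_zero]; noncomm_ring

theorem conjugate'_star_add_self_of_anticomm (hc : c * c = 0)
    (hcc : c * star c + star c * c = 1) (hd : d * c + c * d = 0)
    (hd' : d * star c + star c * d = 0) :
    star (star c + c) * d * (star c + c) = -d := calc
  star (star c + c) * d * (star c + c)
      = (star c * d + d * star c + (c * d + d * c)) * (star c + c)
        - d * ((star c + c) * (star c + c)) := by
    rw [(IsSelfAdjoint.star_add_self c).star_eq]; noncomm_ring
  _ = -d := by
    rw [add_comm (star c * d), hd', add_comm (c * d), hd, star_add_self_mul_self_of_car hc hcc]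
    noncomm_ring

theorem IsStarProjection.one_sub_two_mul_mem_unitary {p : R} (hp : IsStarProjection p) :
    1 - 2 * p ∈ unitary R := by
  convert hp.one_sub.two_mul_sub_one_mem_unitary using 1
  noncomm_ring

theorem conjugate'_one_sub_two_mul_star_mul_self_of_car (hc : c * c = 0)
    (hcc : c * star c + star c * c = 1) :
    star (1 - 2 * (star c * c)) * c * (1 - 2 * (star c * c)) = -c := calc
  star (1 - 2 * (star c * c)) * c * (1 - 2 * (star c * c))
      = c - 2 * ((c * star c + star c * c) * c) + 4 * (star c * (c * c) * star c * c) := by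
    simp only [star_sub, star_one, star_mul, star_star, star_ofNat]; noncomm_ring
  _ = -c := by rw [hcc, hc]; noncomm_ring

theorem commute_star_mul_self_of_anticomm (hd : d * c + c * d = 0)
    (hd' : d * star c + star c * d = 0) : Commute d (star c * c) := calc
  d * (star c * c) = (d * star c + star c * d) * c - star c * (d * c + c * d)
      + star c * c * d := by noncomm_ring
  _ = star c * c * d := by rw [hd, hd']; noncomm_ring

theorem IsStarProjection.conjugate'_one_sub_two_mul_of_commute {p : R} (hp : IsStarProjection p)
    (hd : Commute d p) : star (1 - 2 * p) * d * (1 - 2 * p) = d := by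
  have hP : star (1 - 2 * p) = 1 - 2 * p := by
    rw [two_mul, star_sub, star_add, star_one, hp.isSelfAdjoint.star_eq]
  have hdP : Commute d (1 - 2 * p) := (Commute.one_right d).sub_right
    ((Commute.ofNat_right d 2).mul_right hd)
  calc star (1 - 2 * p) * d * (1 - 2 * p) = d * (1 - 4 * p + 4 * (p * p)) := by
        rw [hP, ← hdP.eq, mul_assoc]; noncomm_ring
    _ = d := by rw [hp.isIdempotentElem.eq]; noncomm_ring

end FermionMode

namespace CAR

variable {ψ : Site ν L → Matrix (Fin N) (Fin N) ℂ}
  {φ : Matrix (Fin N) (Fin N) ℂ ≃⋆ₐ[ℂ] Matrix (Fin N) (Fin N) ℂ}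

theorem mul_self_eq_zero (h : CAR ψ) (x : Site ν L) : ψ x * ψ x = 0 := by
  have h2 : (2 : ℂ) • (ψ x * ψ x) = 0 := by rw [two_smul]; exact h.2 x x
  exact (smul_eq_zero.mp h2).resolve_left two_ne_zero

theorem mul_star_add_star_mul_self (h : CAR ψ) (x : Site ν L) :
    ψ x * star (ψ x) + star (ψ x) * ψ x = 1 := by
  simpa using h.1 x x

theorem mul_star_add_star_mul_of_ne (h : CAR ψ) {x y : Site ν L} (hxy : x ≠ y) :
    ψ x * star (ψ y) + star (ψ y) * ψ x = 0 := by
  simpa [hxy] using h.1 x y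

theorem mul_star_sub_mul_star (h : CAR ψ) (x y : Site ν L) :
    ψ x * star (ψ y) - ψ y * star (ψ x) = star (ψ x) * ψ y - star (ψ y) * ψ x := by
  rcases eq_or_ne x y with rfl | hxy
  · simp
  · rw [eq_neg_of_add_eq_zero_left (h.mul_star_add_star_mul_of_ne hxy),
      eq_neg_of_add_eq_zero_left (h.mul_star_add_star_mul_of_ne hxy.symm)]
    abel

theorem isStarProjection_numOp (h : CAR ψ) (x : Site ν L) : IsStarProjection (numOp ψ x) :=
  isStarProjection_star_mul_self_of_car (h.mul_self_eq_zero x) (h.mul_star_add_star_mul_self x)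

theorem parityFactor_eq (h : CAR ψ) (x : Site ν L) :
    parityFactor ψ x = 1 - 2 * numOp ψ x := by
  rw [parityFactor, NormedSpace.exp_smul_of_isIdempotentElem (h.isStarProjection_numOp x).1,
    ← Complex.exp_eq_exp_ℂ, mul_comm, Complex.exp_pi_mul_I,
    show (-1 - 1 : ℂ) = -2 by norm_num, neg_smul, two_smul, two_mul, sub_eq_add_neg]

theorem parityFactor_mem_unitary (h : CAR ψ) (x : Site ν L) :
    parityFactor ψ x ∈ unitary (Matrix (Fin N) (Fin N) ℂ) := by
  rw [h.parityFactor_eq]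
  exact (h.isStarProjection_numOp x).one_sub_two_mul_mem_unitary

theorem conjugate'_parityFactor_self (h : CAR ψ) (x : Site ν L) :
    star (parityFactor ψ x) * ψ x * parityFactor ψ x = -ψ x := by
  rw [h.parityFactor_eq]
  exact conjugate'_one_sub_two_mul_star_mul_self_of_car (h.mul_self_eq_zero x)
    (h.mul_star_add_star_mul_self x)

theorem conjugate'_parityFactor_of_ne (h : CAR ψ) {x y : Site ν L} (hxy : x ≠ y) :
    star (parityFactor ψ y) * ψ x * parityFactor ψ y = ψ x := by
  rw [h.parityFactor_eq]
  exact (h.isStarProjection_numOp y).conjugate'_one_sub_two_mul_of_commute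
    (commute_star_mul_self_of_anticomm (h.2 x y) (h.mul_star_add_star_mul_of_ne hxy))

theorem map_rho (h : CAR ψ) (hφ : ∀ x, φ (ψ x) = star (ψ x)) (x : Site ν L) :
    φ (rho ψ x) = -rho ψ x := by
  rw [rho, map_sub, map_mul, map_star, map_smul, map_one, hφ, star_star,
    eq_sub_of_add_eq (h.mul_star_add_star_mul_self x)]
  module

variable [NeZero (2 * L)]

theorem uOp_mem_unitary (h : CAR ψ) (x : Site ν L) :
    uOp ψ x ∈ unitary (Matrix (Fin N) (Fin N) ℂ) :=
  mul_mem (list_prod_mem <| by simpa using fun y _ => h.parityFactor_mem_unitary y)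
    (star_add_self_mem_unitary_of_car (h.mul_self_eq_zero x) (h.mul_star_add_star_mul_self x))

theorem conjugate'_uOp_self (h : CAR ψ) (x : Site ν L) :
    star (uOp ψ x) * ψ x * uOp ψ x = star (ψ x) := by
  have hfix : star (((Finset.univ.erase x).toList.map (parityFactor ψ)).prod) * ψ x *
      ((Finset.univ.erase x).toList.map (parityFactor ψ)).prod = ψ x :=
    List.conjugate'_prod_eq_self <| by
      simpa using fun y hy => h.conjugate'_parityFactor_of_ne (Ne.symm hy)
  rw [uOp, conjugate'_mul, hfix]
  exact conjugate'_star_add_self_of_car (h.mul_self_eq_zero x) (h.mul_star_add_star_mul_self x)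

theorem conjugate'_uOp_of_ne (h : CAR ψ) {x y : Site ν L} (hxy : x ≠ y) :
    star (uOp ψ y) * ψ x * uOp ψ y = ψ x := by
  have hflip : star (((Finset.univ.erase y).toList.map (parityFactor ψ)).prod) * ψ x *
      ((Finset.univ.erase y).toList.map (parityFactor ψ)).prod = -ψ x :=
    List.conjugate'_prod_map_eq_of_mem _ (Finset.nodup_toList _) (by simpa using hxy)
      (h.conjugate'_parityFactor_self x) (fun z hz => h.conjugate'_parityFactor_of_ne hz.symm)
      (fun z hz => by rw [mul_neg, neg_mul, h.conjugate'_parityFactor_of_ne hz.symm])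
  rw [uOp, conjugate'_mul, hflip, mul_neg, neg_mul,
    conjugate'_star_add_self_of_anticomm (h.mul_self_eq_zero y) (h.mul_star_add_star_mul_self y)
      (h.2 x y) (h.mul_star_add_star_mul_of_ne hxy), neg_neg]

theorem UPH_mem_unitary (h : CAR ψ) : UPH ψ ∈ unitary (Matrix (Fin N) (Fin N) ℂ) :=
  list_prod_mem <| by simpa using fun x => h.uOp_mem_unitary x

theorem conjugate'_UPH (h : CAR ψ) (x : Site ν L) :
    star (UPH ψ) * ψ x * UPH ψ = star (ψ x) :=
  List.conjugate'_prod_map_eq_of_mem _ (Finset.nodup_toList _) (by simp)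
    (h.conjugate'_uOp_self x) (fun y hy => h.conjugate'_uOp_of_ne hy.symm)
    (fun y hy => by rw [← star_conjugate', h.conjugate'_uOp_of_ne hy.symm])

theorem map_HK (h : CAR ψ) (hφ : ∀ x, φ (ψ x) = star (ψ x)) (κ : ℝ) :
    φ (HK κ ψ) = HK κ ψ := by
  simp only [HK, map_smul, map_sum, map_sub, map_mul, map_star, hφ, star_star,
    h.mul_star_sub_mul_star]

theorem map_Hint (h : CAR ψ) (hφ : ∀ x, φ (ψ x) = star (ψ x)) : φ (Hint ψ) = Hint ψ := by
  simp only [Hint, map_sum, map_mul, h.map_rho hφ, neg_mul_neg]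

end CAR

theorem particle_hole_invariance_general (ν L N : ℕ) [NeZero (2 * L)]
    (ψ : Site ν L → Matrix (Fin N) (Fin N) ℂ) (hCAR : CAR ψ)
    (κ g : ℝ) :
    (∀ x : Site ν L, star (UPH ψ) * ψ x * UPH ψ = star (ψ x)) ∧
    (∀ x : Site ν L, star (UPH ψ) * rho ψ x * UPH ψ = -rho ψ x) ∧
    star (UPH ψ) * Ham κ 0 g ψ * UPH ψ = Ham κ 0 g ψ := by
  obtain ⟨φ, hφ⟩ : ∃ φ : Matrix (Fin N) (Fin N) ℂ ≃⋆ₐ[ℂ] Matrix (Fin N) (Fin N) ℂ,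
      ∀ A, star (UPH ψ) * A * UPH ψ = φ A :=
    ⟨_, fun A => (Unitary.conjStarAlgAut_star_apply ⟨_, hCAR.UPH_mem_unitary⟩ A).symm⟩
  have hψ (x : Site ν L) : φ (ψ x) = star (ψ x) := (hφ _).symm.trans (hCAR.conjugate'_UPH x)
  simp only [hφ]
  refine ⟨hψ, hCAR.map_rho hψ, ?_⟩
  rw [Ham, Complex.ofReal_zero, zero_smul, add_zero, map_add, map_smul, hCAR.map_HK hψ,
    hCAR.map_Hint hψ]

/-- **Particle-hole invariance**: `U_PH* ψ(x) U_PH = ψ(x)*`,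
`U_PH* ρ(x) U_PH = -ρ(x)` and `U_PH* H(0) U_PH = H(0)`. -/
theorem particle_hole_invariance (ν L N : ℕ) [NeZero (2 * L)]
    (hν : 2 ≤ ν) (hL : 1 ≤ L) (hN : 1 ≤ N)
    (ψ : Site ν L → Matrix (Fin N) (Fin N) ℂ) (hCAR : CAR ψ)
    (κ g : ℝ) (hg : 0 ≤ g) :
    (∀ x : Site ν L, star (UPH ψ) * ψ x * UPH ψ = star (ψ x)) ∧
    (∀ x : Site ν L, star (UPH ψ) * rho ψ x * UPH ψ = -rho ψ x) ∧
    star (UPH ψ) * Ham κ 0 g ψ * UPH ψ = Ham κ 0 g ψ :=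
  particle_hole_invariance_general ν L N ψ hCAR κ g

end
end

section
/- Gaussian integral representation for matrix exponentials: for every Hermitian matrix D ∈ M_n(ℂ), exp(−D²) = (4π)^{−1/2} ∫_ℝ exp(ikD) · e^{−k²/4} dk, where the integral is the Bochner integral of the matrix-valued function k ↦ e^{−k²/4} exp(ikD). -/
/-!
Diagonalise `D = U diag(λ) U*` with `U` unitary. Conjugation by `U` is an algebra automorphism
of the finite-dimensional space of matrices, so it commutes with `exp` and with the Bochner
integral; this reduces the identity to diagonal `D`, where entry by entry it is the Fourier
transform of a Gaussian: `∫ e^{-k²/4} e^{ikλ} dk = √(4π) e^{-λ²}`.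
-/

open Matrix MeasureTheory

noncomputable section

attribute [local instance] Matrix.normedAddCommGroup Matrix.normedSpace

open Complex (I)

-- Written in the shape of `integral_cexp_quadratic`.
theorem exp_neg_sq_div_four_smul_cexp_eq (t : ℂ) (k : ℝ) :
    Real.exp (-k ^ 2 / 4) • Complex.exp (I * t * k) =
      Complex.exp (-1 / 4 * k ^ 2 + I * t * k + 0) := by
  rw [Complex.real_smul, Complex.ofReal_exp, ← Complex.exp_add]
  push_cast
  ring_nf

theorem integrable_exp_neg_sq_div_four_smul_cexp (t : ℂ) :
    Integrable fun k : ℝ => Real.exp (-k ^ 2 / 4) • Complex.exp (I * t * k) := by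
  simp_rw [exp_neg_sq_div_four_smul_cexp_eq]
  exact integrable_cexp_quadratic' (by norm_num) _ _

theorem integral_exp_neg_sq_div_four_smul_cexp (t : ℂ) :
    ∫ k : ℝ, Real.exp (-k ^ 2 / 4) • Complex.exp (I * t * k) =
      √(4 * Real.pi) • Complex.exp (-t ^ 2) := by
  simp_rw [exp_neg_sq_div_four_smul_cexp_eq]
  rw [integral_cexp_quadratic (by norm_num), Complex.real_smul, Real.sqrt_eq_rpow,
    Complex.ofReal_cpow (by positivity)]
  congr 1
  · push_cast
    ring_nf
  · rw [mul_pow, Complex.I_sq]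
    ring_nf

theorem integral_exp_neg_sq_div_four_smul_cexp_pi {ι : Type*} [Fintype ι] (t : ι → ℂ) :
    ∫ k : ℝ, (fun i => Real.exp (-k ^ 2 / 4) • Complex.exp (I * t i * k)) =
      √(4 * Real.pi) • fun i => Complex.exp (-t i ^ 2) :=
  funext fun i =>
    (eval_integral (fun j => integrable_exp_neg_sq_div_four_smul_cexp (t j)) i).trans
      (integral_exp_neg_sq_div_four_smul_cexp (t i))

namespace Matrix

variable {ι : Type*} [Fintype ι] [DecidableEq ι]

theorem exp_diagonal_eq_diagonal_cexp (v : ι → ℂ) :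
    NormedSpace.exp (diagonal v) = diagonal fun i => Complex.exp (v i) := by
  rw [exp_diagonal, Pi.exp_def]
  simp only [Complex.exp_eq_exp_ℂ]

theorem integral_diagonal {X 𝕜 : Type*} [MeasurableSpace X] {μ : Measure X} [RCLike 𝕜]
    (f : X → ι → 𝕜) : ∫ x, diagonal (f x) ∂μ = diagonal (∫ x, f x ∂μ) :=
  (⟨diagonalLinearMap ι ℝ 𝕜, norm_diagonal⟩ : (ι → 𝕜) →ₗᵢ[ℝ] Matrix ι ι 𝕜).integral_comp_comm f

section conjStarAlgAut

variable {𝕜 : Type*} [RCLike 𝕜] (u : unitary (Matrix ι ι 𝕜))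

theorem exp_conjStarAlgAut (A : Matrix ι ι 𝕜) :
    NormedSpace.exp (Unitary.conjStarAlgAut 𝕜 _ u A) =
      Unitary.conjStarAlgAut 𝕜 _ u (NormedSpace.exp A) :=
  exp_units_conj (Unitary.toUnits u) A

theorem integral_conjStarAlgAut {X : Type*} [MeasurableSpace X] {μ : Measure X}
    (F : X → Matrix ι ι 𝕜) :
    ∫ x, Unitary.conjStarAlgAut 𝕜 _ u (F x) ∂μ = Unitary.conjStarAlgAut 𝕜 _ u (∫ x, F x ∂μ) :=
  (Unitary.conjStarAlgAut 𝕜 _ u).toAlgEquiv.toLinearEquiv.toContinuousLinearEquiv.integral_comp_comm F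

end conjStarAlgAut

theorem exp_neg_mul_self_diagonal_eq_integral (μ : ι → ℂ) :
    NormedSpace.exp (-(diagonal μ * diagonal μ)) =
      (√(4 * Real.pi))⁻¹ •
        ∫ k : ℝ, Real.exp (-k ^ 2 / 4) • NormedSpace.exp ((I * k) • diagonal μ) := by
  have integrand_eq (k : ℝ) :
      Real.exp (-k ^ 2 / 4) • NormedSpace.exp ((I * k) • diagonal μ) =
        diagonal fun i => Real.exp (-k ^ 2 / 4) • Complex.exp (I * μ i * k) := by
    rw [← diagonal_smul, exp_diagonal_eq_diagonal_cexp, ← diagonal_smul]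
    congr 1 with i
    simp only [Pi.smul_apply, smul_eq_mul]
    ring_nf
  simp_rw [integrand_eq, integral_diagonal, integral_exp_neg_sq_div_four_smul_cexp_pi,
    diagonal_mul_diagonal, diagonal_neg, exp_diagonal_eq_diagonal_cexp, diagonal_smul, smul_smul,
    sq]
  rw [inv_mul_cancel₀ (by positivity), one_smul]

theorem exp_neg_mul_self_conjStarAlgAut_eq_integral (u : unitary (Matrix ι ι ℂ))
    {A : Matrix ι ι ℂ}
    (hA : NormedSpace.exp (-(A * A)) =
      (√(4 * Real.pi))⁻¹ • ∫ k : ℝ, Real.exp (-k ^ 2 / 4) • NormedSpace.exp ((I * k) • A)) :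
    NormedSpace.exp (-(Unitary.conjStarAlgAut ℂ _ u A * Unitary.conjStarAlgAut ℂ _ u A)) =
      (√(4 * Real.pi))⁻¹ • ∫ k : ℝ, Real.exp (-k ^ 2 / 4) •
        NormedSpace.exp ((I * k) • Unitary.conjStarAlgAut ℂ _ u A) := by
  have conj_real_smul (r : ℝ) (X : Matrix ι ι ℂ) :
      Unitary.conjStarAlgAut ℂ _ u (r • X) = r • Unitary.conjStarAlgAut ℂ _ u X :=
    (Unitary.conjStarAlgAut ℂ _ u).toAlgEquiv.toAlgHom.map_smul_of_tower r X
  simp_rw [← map_mul, ← map_neg, ← map_smul, exp_conjStarAlgAut, ← conj_real_smul,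
    integral_conjStarAlgAut, hA, conj_real_smul]

end Matrix

/-- **Gaussian integral representation for matrix exponentials**: for every
Hermitian matrix `D ∈ M_n(ℂ)`,
`exp(-D²) = (4π)^{-1/2} ∫_ℝ e^{ikD} e^{-k²/4} dk`,
the integral being the Bochner integral of the matrix-valued function
`k ↦ e^{-k²/4} exp(ikD)`. -/
theorem gaussian_integral_matrix_exp (n : ℕ) (D : Matrix (Fin n) (Fin n) ℂ)
    (hD : Dᴴ = D) :
    NormedSpace.exp (-(D * D)) =
      (Real.sqrt (4 * Real.pi))⁻¹ •
        ∫ k : ℝ, Real.exp (-k ^ 2 / 4) •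
          NormedSpace.exp ((Complex.I * (k : ℂ)) • D) := by
  rw [IsHermitian.spectral_theorem hD]
  exact exp_neg_mul_self_conjStarAlgAut_eq_integral _ (exp_neg_mul_self_diagonal_eq_integral _)

end
end

section
/- Sum rule (operator identity): Σ_{p∈Λ*} (ρ̃_p ρ̃_{−p} + ρ̃_{−p} ρ̃_p) = (|Λ|/2)·1, where the sum runs over the full dual lattice Λ*. Consequently, for any β > 0, Σ_{p∈Λ*} ⟨ρ̃_p ρ̃_{−p} + ρ̃_{−p} ρ̃_p⟩_{β,0} = |Λ|/2. -/
open Matrix Filter MeasureTheory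

noncomputable section

variable {ν L N : ℕ}

/-- The dual momentum `p = (π n₁/L, …, π n_ν/L)` associated with `n ∈ Λ*`. -/
def momentum (ν L : ℕ) (n : Site ν L) : Fin ν → ℝ :=
  fun μ => Real.pi * ((n μ).val : ℝ) / (L : ℝ)

/-- The inner product `p · x` of a dual momentum `p` (labelled by `n`) with `x`. -/
def pdot (ν L : ℕ) (n x : Site ν L) : ℝ :=
  ∑ μ : Fin ν, momentum ν L n μ * ((x μ).val : ℝ)

/-- The Fourier mode `ρ̃_p = |Λ|^{-1/2} Σ_x e^{i p·x} ρ(x)` of the charge density. -/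
def rhoTilde [NeZero (2 * L)] (ψ : Site ν L → Matrix (Fin N) (Fin N) ℂ)
    (n : Site ν L) : Matrix (Fin N) (Fin N) ℂ :=
  ((Real.sqrt (Fintype.card (Site ν L)) : ℂ))⁻¹ •
    ∑ x : Site ν L, Complex.exp (Complex.I * ((pdot ν L n x : ℝ) : ℂ)) • rho ψ x

/-!
The coefficients `|Λ|^{-1/2} e^{ip·x}` are the values of the standard additive character of
`ZMod (2L)` at a dot product, hence orthonormal; so `ρ ↦ ρ̃` is a unitary change of basis and
`Σ_p ρ̃_p ρ̃_{-p} = Σ_x ρ(x)²` (Plancherel; no commutativity is needed). The CAR make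
`ψ(x)*ψ(x)` a projection, so `ρ(x)² = 1/4` and each of the two sums equals `|Λ|/4`.

The thermal statement follows by linearity of `⟨·⟩` once `tr e^{-βH} ≠ 0`. The densities at
distinct sites are even in anticommuting variables, so they commute; hence `H` is Hermitian and
`e^{-βH}` is positive definite.
-/

theorem AddChar.map_sum_eq_prod {A M ι : Type*} [AddCommMonoid A] [CommMonoid M]
    (ψ : AddChar A M) (s : Finset ι) (f : ι → A) :
    ψ (∑ i ∈ s, f i) = ∏ i ∈ s, ψ (f i) := by
  classical
  induction s using Finset.induction_on with
  | empty => simp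
  | insert i s hi ih => rw [Finset.sum_insert hi, Finset.prod_insert hi, map_add_eq_mul, ih]

theorem AddChar.sum_apply_dotProduct {R R' ι : Type*} [CommRing R] [Fintype R] [DecidableEq R]
    [CommRing R'] [IsDomain R'] [Fintype ι] [DecidableEq ι] {ψ : AddChar R R'}
    (hψ : ψ.IsPrimitive) (z : ι → R) :
    ∑ n : ι → R, ψ (n ⬝ᵥ z) = if z = 0 then (Fintype.card (ι → R) : R') else 0 := by
  simp_rw [dotProduct, AddChar.map_sum_eq_prod]
  rw [← Fintype.prod_sum (fun i c => ψ (c * z i))]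
  simp_rw [AddChar.sum_mulShift _ hψ, Nat.cast_ite, Nat.cast_zero]
  rw [Finset.prod_ite_zero]
  simp [funext_iff]

theorem sum_mul_sum_of_biorthogonal {R A K ι : Type*} [CommSemiring R] [Semiring A]
    [Algebra R A] [Fintype K] [Fintype ι] [DecidableEq ι] (f g : K → ι → R) (a : ι → A)
    (hfg : ∀ x y, ∑ k, f k x * g k y = if x = y then 1 else 0) :
    ∑ k, (∑ x, f k x • a x) * (∑ y, g k y • a y) = ∑ x, a x * a x := by
  simp_rw [Finset.sum_mul_sum, smul_mul_smul_comm]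
  rw [Finset.sum_comm]
  simp_rw [Finset.sum_comm (s := Finset.univ (α := K)), ← Finset.sum_smul, hfg, ite_smul,
    one_smul, zero_smul, Finset.sum_ite_eq, Finset.mem_univ, if_true]

theorem isIdempotentElem_mul_of_add_mul_eq_one {A : Type*} [Ring A] {a b : A}
    (hab : a * b + b * a = 1) (ha : a * a = 0) : IsIdempotentElem (b * a) := by
  have hab' : a * b = 1 - b * a := eq_sub_of_add_eq hab
  calc b * a * (b * a) = b * (a * b) * a := by noncomm_ring
    _ = b * a - b * b * (a * a) := by rw [hab']; noncomm_ring
    _ = b * a := by rw [ha, mul_zero, sub_zero]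

theorem IsIdempotentElem.sub_half_mul_self {K A : Type*} [Field K] [CharZero K] [Ring A]
    [Algebra K A] {p : A} (hp : IsIdempotentElem p) :
    (p - (1 / 2 : K) • 1) * (p - (1 / 2 : K) • 1) = (1 / 4 : K) • 1 := by
  simp only [sub_mul, mul_sub, smul_mul_assoc, mul_smul_comm, one_mul, mul_one, hp.eq]
  module

theorem commute_mul_of_anticommute {A : Type*} [Ring A] {u v b : A}
    (hu : u * b + b * u = 0) (hv : v * b + b * v = 0) : Commute (u * v) b := by
  have hu' : u * b = -(b * u) := eq_neg_of_add_eq_zero_left hu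
  have hv' : v * b = -(b * v) := eq_neg_of_add_eq_zero_left hv
  calc u * v * b = -(u * b * v) := by rw [mul_assoc, hv']; noncomm_ring
    _ = b * (u * v) := by rw [hu']; noncomm_ring

theorem Complex.isSelfAdjoint_ofReal (r : ℝ) : IsSelfAdjoint (r : ℂ) := Complex.conj_ofReal r

theorem isSelfAdjoint_neg_one_pow (k : ℕ) : IsSelfAdjoint ((-1 : ℂ) ^ k) :=
  (IsSelfAdjoint.one ℂ).neg.pow k

open scoped ComplexOrder in
theorem Matrix.IsHermitian.posDef_exp {n : Type*} [Fintype n] [DecidableEq n]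
    {A : Matrix n n ℂ} (hA : A.IsHermitian) : (NormedSpace.exp A).PosDef := by
  set B := (2⁻¹ : ℝ) • A
  have hB : B.IsHermitian := hA.smul (.all _)
  have hsquare : NormedSpace.exp A = (NormedSpace.exp B)ᴴ * NormedSpace.exp B := by
    rw [hB.exp.eq, ← Matrix.exp_add_of_commute B B (Commute.refl B), ← two_smul ℝ B,
      smul_smul]
    norm_num
  rw [hsquare]
  exact .conjTranspose_mul_self _ (mulVec_injective_iff_isUnit.mpr (Matrix.isUnit_exp _))

open scoped ComplexOrder in
theorem Matrix.IsHermitian.trace_exp_ne_zero {n : Type*} [Fintype n] [DecidableEq n]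
    [Nonempty n] {A : Matrix n n ℂ} (hA : A.IsHermitian) : (NormedSpace.exp A).trace ≠ 0 :=
  hA.posDef_exp.trace_pos.ne'

section Fourier

variable [NeZero (2 * L)]

def planeWave (n x : Site ν L) : ℂ :=
  ((√(Fintype.card (Site ν L)) : ℝ) : ℂ)⁻¹ * ZMod.stdAddChar (n ⬝ᵥ x)

theorem exp_I_pdot (n x : Site ν L) :
    Complex.exp (Complex.I * (pdot ν L n x : ℂ)) = ZMod.stdAddChar (n ⬝ᵥ x) := by
  simp_rw [pdot, dotProduct, AddChar.map_sum_eq_prod, Complex.ofReal_sum, Finset.mul_sum,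
    Complex.exp_sum]
  refine Finset.prod_congr rfl fun μ _ => ?_
  rw [show n μ * x μ = (((n μ).val * (x μ).val : ℕ) : ZMod (2 * L)) by simp,
    ZMod.stdAddChar_apply, ZMod.toCircle_natCast, momentum]
  push_cast
  ring_nf

theorem rhoTilde_eq_sum (ψ : Site ν L → Matrix (Fin N) (Fin N) ℂ) (n : Site ν L) :
    rhoTilde ψ n = ∑ x, planeWave n x • rho ψ x := by
  simp_rw [rhoTilde, planeWave, Finset.smul_sum, smul_smul, exp_I_pdot]

theorem sum_planeWave_mul_planeWave_neg (x y : Site ν L) :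
    ∑ n, planeWave n x * planeWave (-n) y = if x = y then 1 else 0 := by
  have hcard : (Fintype.card (Site ν L) : ℂ) ≠ 0 := Nat.cast_ne_zero.mpr Fintype.card_ne_zero
  have hnorm : ((√(Fintype.card (Site ν L)) : ℝ) : ℂ)⁻¹ * ((√(Fintype.card (Site ν L)) : ℝ) : ℂ)⁻¹
      = (Fintype.card (Site ν L) : ℂ)⁻¹ := by
    rw [← mul_inv, ← Complex.ofReal_mul, Real.mul_self_sqrt (Nat.cast_nonneg _),
      Complex.ofReal_natCast]
  calc _ = (Fintype.card (Site ν L) : ℂ)⁻¹ * ∑ n : Site ν L, ZMod.stdAddChar (n ⬝ᵥ (x - y)) := by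
        rw [← hnorm, Finset.mul_sum]
        refine Finset.sum_congr rfl fun n _ => ?_
        rw [planeWave, planeWave, dotProduct_sub, sub_eq_add_neg, ← neg_dotProduct,
          AddChar.map_add_eq_mul]
        ring
    _ = if x = y then 1 else 0 := by
        rw [AddChar.sum_apply_dotProduct (ZMod.isPrimitive_stdAddChar _)]
        simp_rw [sub_eq_zero]
        split_ifs
        · exact inv_mul_cancel₀ hcard
        · exact mul_zero _

theorem sum_rhoTilde_mul_rhoTilde_neg (ψ : Site ν L → Matrix (Fin N) (Fin N) ℂ) :
    ∑ n, rhoTilde ψ n * rhoTilde ψ (-n) = ∑ x, rho ψ x * rho ψ x := by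
  simp_rw [rhoTilde_eq_sum]
  exact sum_mul_sum_of_biorthogonal _ _ _ sum_planeWave_mul_planeWave_neg

end Fourier

section Density

variable {ψ : Site ν L → Matrix (Fin N) (Fin N) ℂ}

theorem isSelfAdjoint_rho (x : Site ν L) : IsSelfAdjoint (rho ψ x) :=
  (IsSelfAdjoint.star_mul_self _).sub
    ((isSelfAdjoint_iff.mpr (by norm_num)).smul (IsSelfAdjoint.one _))

theorem CAR.mul_self_eq_zero_s13 (hCAR : CAR ψ) (x : Site ν L) : ψ x * ψ x = 0 := by
  have h : (2 : ℂ) • (ψ x * ψ x) = 0 := by rw [two_smul]; exact hCAR.2 x x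
  exact (smul_eq_zero.mp h).resolve_left two_ne_zero

theorem rho_mul_self (hCAR : CAR ψ) (x : Site ν L) : rho ψ x * rho ψ x = (1 / 4 : ℂ) • 1 :=
  (isIdempotentElem_mul_of_add_mul_eq_one (by simpa using hCAR.1 x x)
    (hCAR.mul_self_eq_zero_s13 x)).sub_half_mul_self

theorem CAR.commute_star_mul_self (hCAR : CAR ψ) {x y : Site ν L} (hxy : x ≠ y) :
    Commute (star (ψ x) * ψ x) (star (ψ y) * ψ y) := by
  have h₁ := hCAR.1 x y
  have h₂ := hCAR.1 y x
  have h₃ := congrArg star (hCAR.2 y x)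
  rw [if_neg hxy] at h₁
  rw [if_neg hxy.symm, add_comm] at h₂
  simp only [star_add, star_mul, star_zero] at h₃
  exact (commute_mul_of_anticommute h₃ h₁).mul_right
    (commute_mul_of_anticommute h₂ (hCAR.2 x y))

theorem commute_rho (hCAR : CAR ψ) {x y : Site ν L} (hxy : x ≠ y) :
    Commute (rho ψ x) (rho ψ y) :=
  ((hCAR.commute_star_mul_self hxy).sub_right ((Commute.one_right _).smul_right _)).sub_left
    ((Commute.one_left _).smul_left _)

theorem sum_rhoTilde_anticommutator [NeZero (2 * L)] (hCAR : CAR ψ) :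
    ∑ n : Site ν L, (rhoTilde ψ n * rhoTilde ψ (-n) + rhoTilde ψ (-n) * rhoTilde ψ n) =
      ((Fintype.card (Site ν L) : ℂ) / 2) • (1 : Matrix (Fin N) (Fin N) ℂ) := by
  rw [Finset.sum_add_distrib, Fintype.sum_equiv (Equiv.neg _)
    (fun n => rhoTilde ψ (-n) * rhoTilde ψ n) (fun n => rhoTilde ψ n * rhoTilde ψ (-n))
    (fun n => by simp), sum_rhoTilde_mul_rhoTilde_neg]
  simp_rw [rho_mul_self hCAR, Finset.sum_const, Finset.card_univ, ← Nat.cast_smul_eq_nsmul ℂ,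
    smul_smul, ← add_smul]
  congr 1
  ring

end Density

section Hamiltonian

variable [NeZero (2 * L)] {ψ : Site ν L → Matrix (Fin N) (Fin N) ℂ}

theorem self_ne_add_eVec (x : Site ν L) (μ : Fin ν) : x ≠ x + eVec ν L μ := by
  have : Fact (1 < 2 * L) := ⟨by have := NeZero.ne (2 * L); omega⟩
  intro h
  simpa [eVec] using congrFun h μ

theorem isSelfAdjoint_HK (κ : ℝ) : IsSelfAdjoint (HK κ ψ) := by
  rw [HK, mul_smul, Complex.isSelfAdjoint_I_smul_iff_mem_skewAdjoint, skewAdjoint.mem_iff]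
  simp [star_sum, star_smul, (isSelfAdjoint_neg_one_pow _).star_eq, smul_sub,
    Finset.sum_sub_distrib]

theorem isSelfAdjoint_orderOp : IsSelfAdjoint (orderOp ψ) :=
  isSelfAdjoint_sum _ fun x _ => (isSelfAdjoint_neg_one_pow _).smul (isSelfAdjoint_rho x)

theorem isSelfAdjoint_Hint (hCAR : CAR ψ) : IsSelfAdjoint (Hint ψ) :=
  isSelfAdjoint_sum _ fun x _ => isSelfAdjoint_sum _ fun μ _ =>
    ((isSelfAdjoint_rho x).commute_iff (isSelfAdjoint_rho _)).mp
      (commute_rho hCAR (self_ne_add_eVec x μ))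

theorem isSelfAdjoint_Ham (hCAR : CAR ψ) (κ m g : ℝ) : IsSelfAdjoint (Ham κ m g ψ) :=
  ((isSelfAdjoint_HK κ).add ((Complex.isSelfAdjoint_ofReal m).smul isSelfAdjoint_orderOp)).add
    ((Complex.isSelfAdjoint_ofReal g).smul (isSelfAdjoint_Hint hCAR))

end Hamiltonian

theorem thermal_sum {ι : Type*} (β : ℝ) (H : Matrix (Fin N) (Fin N) ℂ) (s : Finset ι)
    (A : ι → Matrix (Fin N) (Fin N) ℂ) :
    thermal β H (∑ i ∈ s, A i) = ∑ i ∈ s, thermal β H (A i) := by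
  simp only [thermal, Finset.sum_mul, Matrix.trace_sum, Finset.sum_div]

theorem thermal_smul_one {β : ℝ} {H : Matrix (Fin N) (Fin N) ℂ}
    (hZ : (NormedSpace.exp ((-(β : ℂ)) • H)).trace ≠ 0) (c : ℂ) :
    thermal β H (c • 1) = c := by
  rw [thermal, smul_mul_assoc, one_mul, trace_smul, smul_eq_mul, mul_div_assoc, div_self hZ,
    mul_one]

theorem sum_rule_general (ν L N : ℕ) [NeZero (2 * L)]
    (hN : 1 ≤ N)
    (ψ : Site ν L → Matrix (Fin N) (Fin N) ℂ) (hCAR : CAR ψ) :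
    (∑ n : Site ν L,
        (rhoTilde ψ n * rhoTilde ψ (-n) + rhoTilde ψ (-n) * rhoTilde ψ n) =
        ((Fintype.card (Site ν L) : ℂ) / 2) • (1 : Matrix (Fin N) (Fin N) ℂ)) ∧
    (∀ (κ g β : ℝ), 0 ≤ g → 0 < β →
        ∑ n : Site ν L,
          thermal β (Ham κ 0 g ψ)
            (rhoTilde ψ n * rhoTilde ψ (-n) + rhoTilde ψ (-n) * rhoTilde ψ n) =
          (Fintype.card (Site ν L) : ℂ) / 2) := by
  refine ⟨sum_rhoTilde_anticommutator hCAR, fun κ g β _ _ => ?_⟩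
  have : Nonempty (Fin N) := ⟨⟨0, hN⟩⟩
  have hH : ((-(β : ℂ)) • Ham κ 0 g ψ).IsHermitian :=
    (Complex.isSelfAdjoint_ofReal β).neg.smul (isSelfAdjoint_Ham hCAR κ 0 g)
  rw [← thermal_sum, sum_rhoTilde_anticommutator hCAR, thermal_smul_one hH.trace_exp_ne_zero]

/-- **Sum rule**: the operator identity
`Σ_{p ∈ Λ*} (ρ̃_p ρ̃_{-p} + ρ̃_{-p} ρ̃_p) = (|Λ|/2)·1` holds, where the sum runs over
the full dual lattice; consequently for any `β > 0` the thermal expectations sum to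
`|Λ|/2`. -/
theorem sum_rule (ν L N : ℕ) [NeZero (2 * L)]
    (hν : 2 ≤ ν) (hL : 1 ≤ L) (hN : 1 ≤ N)
    (ψ : Site ν L → Matrix (Fin N) (Fin N) ℂ) (hCAR : CAR ψ) :
    (∑ n : Site ν L,
        (rhoTilde ψ n * rhoTilde ψ (-n) + rhoTilde ψ (-n) * rhoTilde ψ n) =
        ((Fintype.card (Site ν L) : ℂ) / 2) • (1 : Matrix (Fin N) (Fin N) ℂ)) ∧
    (∀ (κ g β : ℝ), 0 ≤ g → 0 < β →
        ∑ n : Site ν L,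
          thermal β (Ham κ 0 g ψ)
            (rhoTilde ψ n * rhoTilde ψ (-n) + rhoTilde ψ (-n) * rhoTilde ψ n) =
          (Fintype.card (Site ν L) : ℂ) / 2) :=
  sum_rule_general ν L N hN ψ hCAR
end
end
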